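/- arXiv:1801.05710 — 3 statements merged into one kernel-verified Lean document; each statement's English description precedes it below -/
import Mathlib

section
/- Let f : E × ℝ₊ → ℝ₊ be of the form f(x,γ) = ⟨g(x), Ẽ[Λ̃(x,γ,ω̃)]⟩ where g : E → ℝ₊^l is locally bounded, Λ̃ ≥ 0 is measurable on E × ℝ₊ × Ω̃ with sup_i Ẽ[sup_x sup_{γ∈(0,γ̄]} Λ̃_i(x,γ,·)] < ∞, and for each i, P̃-a.s.: (i) for every compact K ⊂ E, lim_{γ→0} sup_{x∈K} Λ̃_i(x,γ,ω̃) = 0, and (ii) there is a measurable γ̲(ω̃) ∈ (0,γ̄] with lim_{x→∞} sup_{γ≤γ̲(ω̃)} Λ̃_i(x,γ,ω̃) = 0. Let (x̄_n) ⊂ E and weights η̃_k > 0 with H_n = ∑_{k≤n} η̃_k → ∞, and assume sup_i sup_n (1/H_n) ∑_{k=1}^n η̃_k g_i(x̄_{k−1}) < ∞ and γ_n → 0. Then lim_{n→∞} (1/H_n) ∑_{k=1}^n η̃_k f(x̄_{k−1}, γ_k) = 0. -/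
/-!
For each coordinate `i` and almost every `ω`, the two smallness conditions on `Λ̃ᵢ(·, ·, ω)`
(locally uniform as `γ → 0`, and at infinity for `γ ≤ γ̲(ω)`) combine into smallness uniform
over all of `E` for small `γ`; hence `Λ̃ᵢ(x̄ₖ, γₖ, ω) → 0` along any sequence `x̄`, and by
dominated convergence `Ẽ[Λ̃ᵢ(x̄ₖ, γₖ, ·)] → 0`. A weighted Cesàro average of `bₖ cₖ` with
`cₖ → 0` vanishes as soon as the weighted averages of `bₖ ≥ 0` stay bounded, which applied to
`bₖ = gᵢ(x̄ₖ)` gives the theorem coordinate by coordinate.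
-/

open MeasureTheory Filter Finset Set Topology

theorem sum_range_mul_le_add_mul_sum {w c : ℕ → ℝ} {ε : ℝ} {N n : ℕ} (hw : ∀ k, 0 ≤ w k)
    (hε : 0 ≤ ε) (hc : ∀ k ≥ N, c k ≤ ε) (hNn : N ≤ n) :
    ∑ k ∈ range n, w k * c k ≤ ∑ k ∈ range N, w k * c k + ε * ∑ k ∈ range n, w k := by
  rw [← sum_range_add_sum_Ico _ hNn]
  gcongr
  calc ∑ k ∈ Ico N n, w k * c k ≤ ∑ k ∈ Ico N n, w k * ε :=
        sum_le_sum fun k hk => mul_le_mul_of_nonneg_left (hc k (mem_Ico.1 hk).1) (hw k)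
    _ = ε * ∑ k ∈ Ico N n, w k := by rw [← sum_mul, mul_comm]
    _ ≤ ε * ∑ k ∈ range n, w k := mul_le_mul_of_nonneg_left
        (sum_le_sum_of_subset_of_nonneg (fun k hk => mem_range.2 (mem_Ico.1 hk).2)
          fun k _ _ => hw k) hε

theorem tendsto_weighted_average_mul_of_tendsto_zero {w c H : ℕ → ℝ} {C : ℝ}
    (hw : ∀ k, 0 ≤ w k) (hc : ∀ k, 0 ≤ c k) (hc0 : Tendsto c atTop (𝓝 0))
    (hH : Tendsto H atTop atTop)
    (hbdd : ∀ᶠ n in atTop, (1 / H n) * ∑ k ∈ range n, w k ≤ C) :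
    Tendsto (fun n => (1 / H n) * ∑ k ∈ range n, w k * c k) atTop (𝓝 0) := by
  have hHpos : ∀ᶠ n in atTop, 0 < H n := hH.eventually_gt_atTop 0
  refine tendsto_order.2 ⟨fun a ha => hHpos.mono fun n hn => ha.trans_le ?_, fun δ hδ => ?_⟩
  · exact mul_nonneg (by positivity) (sum_nonneg fun k _ => mul_nonneg (hw k) (hc k))
  set ε := δ / (2 * (|C| + 1))
  have hε : 0 < ε := by positivity
  have hεC : ε * C ≤ δ / 2 :=
    calc ε * C ≤ ε * (|C| + 1) := by gcongr; linarith [le_abs_self C]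
      _ = δ / 2 := by simp only [ε]; field_simp
  obtain ⟨N, hN⟩ := eventually_atTop.1 (hc0.eventually_lt_const hε)
  have hhead : Tendsto (fun n => (∑ k ∈ range N, w k * c k) / H n) atTop (𝓝 0) :=
    tendsto_const_nhds.div_atTop hH
  filter_upwards [hHpos, hbdd, eventually_ge_atTop N, hhead.eventually_lt_const (half_pos hδ)]
    with n hHn hbn hNn hheadn
  calc (1 / H n) * ∑ k ∈ range n, w k * c k
      ≤ (1 / H n) * (∑ k ∈ range N, w k * c k + ε * ∑ k ∈ range n, w k) := by
        gcongr
        exact sum_range_mul_le_add_mul_sum hw hε.le (fun k hk => (hN k hk).le) hNn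
    _ = (∑ k ∈ range N, w k * c k) / H n + ε * ((1 / H n) * ∑ k ∈ range n, w k) := by ring
    _ ≤ (∑ k ∈ range N, w k * c k) / H n + ε * C := by gcongr
    _ < δ / 2 + δ / 2 := add_lt_add_of_lt_of_le hheadn hεC
    _ = δ := add_halves δ

theorem exists_forall_le_of_isCompact_of_compl_isCompact {E : Type*} [TopologicalSpace E]
    {F : E → ℝ → ℝ} {γ₀ : ℝ} (hγ₀ : 0 < γ₀)
    (hcpt : ∀ K : Set E, IsCompact K → ∀ ε > 0, ∃ δ > 0, ∀ γ ∈ Ioc (0 : ℝ) δ, ∀ x ∈ K, F x γ ≤ ε)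
    (hcocpt : ∀ ε > 0, ∃ K : Set E, IsCompact K ∧ ∀ x ∉ K, ∀ γ ∈ Ioc (0 : ℝ) γ₀, F x γ ≤ ε)
    {ε : ℝ} (hε : 0 < ε) : ∃ δ > 0, ∀ γ ∈ Ioc (0 : ℝ) δ, ∀ x, F x γ ≤ ε := by
  obtain ⟨K, hK, hout⟩ := hcocpt ε hε
  obtain ⟨δ, hδ, hin⟩ := hcpt K hK ε hε
  refine ⟨min δ γ₀, lt_min hδ hγ₀, fun γ hγ x => ?_⟩
  by_cases hx : x ∈ K
  · exact hin γ ⟨hγ.1, hγ.2.trans (min_le_left _ _)⟩ x hx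
  · exact hout x hx γ ⟨hγ.1, hγ.2.trans (min_le_right _ _)⟩

theorem tendsto_comp_of_forall_le {E : Type*} {F : E → ℝ → ℝ} (hF : ∀ x γ, 0 ≤ F x γ)
    (hunif : ∀ ε > 0, ∃ δ > 0, ∀ γ ∈ Ioc (0 : ℝ) δ, ∀ x, F x γ ≤ ε)
    (x : ℕ → E) {γ : ℕ → ℝ} (hγ : Tendsto γ atTop (𝓝[>] 0)) :
    Tendsto (fun k => F (x k) (γ k)) atTop (𝓝 0) := by
  refine tendsto_order.2 ⟨fun a ha => .of_forall fun k => ha.trans_le (hF _ _), fun ε hε => ?_⟩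
  obtain ⟨δ, hδ, hle⟩ := hunif (ε / 2) (half_pos hε)
  filter_upwards [hγ (Ioc_mem_nhdsGT hδ)] with k hk
  exact (hle _ hk _).trans_lt (half_lt_self hε)

theorem weighted_remainder_vanishes_general {E Ω' : Type*} [MetricSpace E]
    {mΩ : MeasurableSpace Ω'} (μt : Measure Ω')
    (l : ℕ)
    (g : E → Fin l → ℝ) (hg0 : ∀ x i, 0 ≤ g x i)
    (γbar : ℝ)
    (Λ : E → ℝ → Ω' → Fin l → ℝ) (hΛ0 : ∀ x γ' ω i, 0 ≤ Λ x γ' ω i)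
    (hΛint : ∀ x γ' i, Integrable (fun ω => Λ x γ' ω i) μt)
    (hdom : ∀ i, ∃ B : Ω' → ℝ, Integrable B μt ∧
      ∀ x, ∀ γ' ∈ Set.Ioc (0 : ℝ) γbar, ∀ ω, Λ x γ' ω i ≤ B ω)
    (γlow : Ω' → ℝ)
    (hγlowmem : ∀ ω, γlow ω ∈ Set.Ioc (0 : ℝ) γbar)
    (hi : ∀ᵐ ω ∂μt, ∀ i, ∀ K : Set E, IsCompact K → ∀ ε > 0, ∃ δ > 0,
      ∀ γ' ∈ Set.Ioc (0 : ℝ) δ, ∀ x ∈ K, Λ x γ' ω i ≤ ε)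
    (hii : ∀ᵐ ω ∂μt, ∀ i, ∀ ε > 0, ∃ K : Set E, IsCompact K ∧
      ∀ x ∉ K, ∀ γ' ∈ Set.Ioc (0 : ℝ) (γlow ω), Λ x γ' ω i ≤ ε)
    (xb : ℕ → E) (η : ℕ → ℝ) (hηpos : ∀ n, 0 < η n)
    (H : ℕ → ℝ)
    (hHtop : Tendsto H atTop atTop)
    (hsup : ∃ C, ∀ i, ∀ n,
      (1 / H n) * ∑ k ∈ Finset.range n, η k * g (xb k) i ≤ C)
    (γ : ℕ → ℝ) (hγpos : ∀ n, 0 < γ n) (hγle : ∀ n, γ n ≤ γbar)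
    (hγ0 : Tendsto γ atTop (nhds 0)) :
    Tendsto (fun n => (1 / H n) * ∑ k ∈ Finset.range n,
        η k * ∑ i, g (xb k) i * ∫ ω, Λ (xb k) (γ k) ω i ∂μt)
      atTop (nhds 0) := by
  obtain ⟨C, hC⟩ := hsup
  have hγ : Tendsto γ atTop (𝓝[>] 0) := tendsto_nhdsWithin_iff.2 ⟨hγ0, .of_forall hγpos⟩
  have hint : ∀ i, Tendsto (fun k => ∫ ω, Λ (xb k) (γ k) ω i ∂μt) atTop (𝓝 0) := fun i => by
    obtain ⟨B, hBint, hBle⟩ := hdom i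
    have := tendsto_integral_of_dominated_convergence B
      (fun k => (hΛint _ _ i).aestronglyMeasurable) hBint
      (fun k => .of_forall fun ω => (Real.norm_of_nonneg (hΛ0 _ _ _ _)).trans_le
        (hBle _ _ ⟨hγpos k, hγle k⟩ ω))
      (by
        filter_upwards [hi, hii] with ω hcpt hcocpt
        exact tendsto_comp_of_forall_le (hΛ0 · · ω i) (fun ε hε =>
          exists_forall_le_of_isCompact_of_compl_isCompact (hγlowmem ω).1 (hcpt i) (hcocpt i) hε)
          xb hγ)
    rwa [integral_zero] at this
  have hcoord : ∀ i, Tendsto (fun n => (1 / H n) * ∑ k ∈ range n,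
      η k * g (xb k) i * ∫ ω, Λ (xb k) (γ k) ω i ∂μt) atTop (𝓝 0) := fun i =>
    tendsto_weighted_average_mul_of_tendsto_zero (fun k => mul_nonneg (hηpos k).le (hg0 _ i))
      (fun k => integral_nonneg fun ω => hΛ0 _ _ _ _) (hint i) hHtop (.of_forall (hC i))
  simpa [Finset.mul_sum, Finset.sum_comm (s := range _), mul_assoc] using
    tendsto_finsetSum univ fun i _ => hcoord i

/-- Vanishing of weighted empirical averages of remainders
`f(x,γ) = ⟨g(x), Ẽ[Λ̃(x,γ,·)]⟩` along a sequence, under local boundedness of `g`,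
uniform integrable domination of `Λ̃`, local-uniform vanishing as `γ → 0`, and
vanishing at infinity for small steps. -/
theorem weighted_remainder_vanishes {E Ω' : Type*} [MetricSpace E]
    [LocallyCompactSpace E] [TopologicalSpace.SeparableSpace E]
    {mΩ : MeasurableSpace Ω'} (μt : Measure Ω') [IsProbabilityMeasure μt]
    (l : ℕ) (hl : 0 < l)
    (g : E → Fin l → ℝ) (hg0 : ∀ x i, 0 ≤ g x i)
    (hgloc : ∀ K : Set E, IsCompact K → ∃ C, ∀ x ∈ K, ∀ i, g x i ≤ C)
    (γbar : ℝ) (hγbar : 0 < γbar)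
    (Λ : E → ℝ → Ω' → Fin l → ℝ) (hΛ0 : ∀ x γ' ω i, 0 ≤ Λ x γ' ω i)
    (hΛint : ∀ x γ' i, Integrable (fun ω => Λ x γ' ω i) μt)
    (hdom : ∀ i, ∃ B : Ω' → ℝ, Integrable B μt ∧
      ∀ x, ∀ γ' ∈ Set.Ioc (0 : ℝ) γbar, ∀ ω, Λ x γ' ω i ≤ B ω)
    (γlow : Ω' → ℝ) (hγlowmeas : Measurable γlow)
    (hγlowmem : ∀ ω, γlow ω ∈ Set.Ioc (0 : ℝ) γbar)
    (hi : ∀ᵐ ω ∂μt, ∀ i, ∀ K : Set E, IsCompact K → ∀ ε > 0, ∃ δ > 0,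
      ∀ γ' ∈ Set.Ioc (0 : ℝ) δ, ∀ x ∈ K, Λ x γ' ω i ≤ ε)
    (hii : ∀ᵐ ω ∂μt, ∀ i, ∀ ε > 0, ∃ K : Set E, IsCompact K ∧
      ∀ x ∉ K, ∀ γ' ∈ Set.Ioc (0 : ℝ) (γlow ω), Λ x γ' ω i ≤ ε)
    (xb : ℕ → E) (η : ℕ → ℝ) (hηpos : ∀ n, 0 < η n)
    (H : ℕ → ℝ) (hH : ∀ n, H n = ∑ k ∈ Finset.range n, η k)
    (hHtop : Tendsto H atTop atTop)
    (hsup : ∃ C, ∀ i, ∀ n,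
      (1 / H n) * ∑ k ∈ Finset.range n, η k * g (xb k) i ≤ C)
    (γ : ℕ → ℝ) (hγpos : ∀ n, 0 < γ n) (hγle : ∀ n, γ n ≤ γbar)
    (hγ0 : Tendsto γ atTop (nhds 0)) :
    Tendsto (fun n => (1 / H n) * ∑ k ∈ Finset.range n,
        η k * ∑ i, g (xb k) i * ∫ ω, Λ (xb k) (γ k) ω i ∂μt)
      atTop (nhds 0) :=
  weighted_remainder_vanishes_general (mΩ := mΩ) μt l g hg0 γbar Λ hΛ0 hΛint hdom γlow hγlowmem hi
    hii xb η hηpos H hHtop hsup γ hγpos hγle hγ0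
end

section
/- Let f : E → ℝ be Lipschitz. For one step of the Talay scheme with the notation above, E[ |f(X̄') − f(x + γ b(x) + γ² Ab(x))|^ρ ] ≤ C_f γ^{ρ/2} Tr[σσ*(x)]^{ρ/2} + C_f γ^ρ |Dσ(x)|^ρ Tr[σσ*(x)]^{ρ/2} + C_f γ^{3ρ/2} Tr[σ̃σ̃*(x)]^{ρ/2}, for every ρ ∈ [1,2], provided the innovation U satisfies E|U|^ρ < ∞ and W has ρ-th moments. -/
/-!
After subtracting the deterministic part `x + γ b(x) + γ² Ab(x)`, the increment is the sum of
`√γ σU`, `γ (Dσ; σW*)` and `γ^{3/2} σ̃U`. Since `f` is Lipschitz and `t ↦ t^ρ` is convex for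
`ρ ≥ 1`, the `ρ`-th power of the increment of `f` is at most `K^ρ 3^{ρ-1}` times the sum of the
`ρ`-th powers of the norms of these three vectors. Cauchy–Schwarz bounds each of them pointwise by
a Frobenius norm of the coefficients times `|U|` or `|W|`, so integrating leaves only the `ρ`-th
moments of `U` and `W`.
-/

open MeasureTheory
open scoped NNReal

lemma sum_sq_sum_mul_le {ι κ : Type*} [Fintype ι] [Fintype κ] (A : ι → κ → ℝ) (v : κ → ℝ) :
    ∑ i, (∑ j, A i j * v j) ^ 2 ≤ (∑ i, ∑ j, A i j ^ 2) * ∑ j, v j ^ 2 := by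
  rw [Finset.sum_mul]
  exact Finset.sum_le_sum fun i _ => Finset.sum_mul_sq_le_sq_mul_sq _ _ _

lemma sum_sq_sum_sum_sum_mul_mul_le {ι κ α ν : Type*} [Fintype ι] [Fintype κ] [Fintype α]
    [Fintype ν] (D : α → ι → κ → ℝ) (S : α → ν → ℝ) (W : κ → ν → ℝ) :
    ∑ i, (∑ j, ∑ k, ∑ l, D l i j * S l k * W j k) ^ 2
      ≤ (∑ l, ∑ i, ∑ j, D l i j ^ 2) * ((∑ l, ∑ k, S l k ^ 2) * ∑ j, ∑ k, W j k ^ 2) := by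
  have hsum : ∀ i, ∑ j, ∑ k, ∑ l, D l i j * S l k * W j k
      = ∑ p : α × κ, D p.1 i p.2 * ∑ k, W p.2 k * S p.1 k := by
    intro i
    calc _ = ∑ j, ∑ l, ∑ k, D l i j * S l k * W j k :=
          Finset.sum_congr rfl fun j _ => Finset.sum_comm
      _ = ∑ l, ∑ j, ∑ k, D l i j * S l k * W j k := Finset.sum_comm
      _ = _ := by
          simp only [Fintype.sum_prod_type, Finset.mul_sum]
          exact Finset.sum_congr rfl fun l _ => Finset.sum_congr rfl fun j _ =>
            Finset.sum_congr rfl fun k _ => by ring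
  have hSW : ∑ p : α × κ, (∑ k, W p.2 k * S p.1 k) ^ 2
      ≤ (∑ l, ∑ k, S l k ^ 2) * ∑ j, ∑ k, W j k ^ 2 := by
    rw [Fintype.sum_prod_type, Finset.sum_mul]
    refine Finset.sum_le_sum fun l _ => ?_
    rw [mul_comm]
    exact sum_sq_sum_mul_le W (S l)
  have hD : ∑ i, ∑ p : α × κ, D p.1 i p.2 ^ 2 = ∑ l, ∑ i, ∑ j, D l i j ^ 2 := by
    simp only [Fintype.sum_prod_type]
    exact Finset.sum_comm
  simp only [hsum]
  calc _ ≤ (∑ i, ∑ p : α × κ, D p.1 i p.2 ^ 2) * ∑ p : α × κ, (∑ k, W p.2 k * S p.1 k) ^ 2 :=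
        sum_sq_sum_mul_le _ _
    _ ≤ _ := by
        rw [hD]
        exact mul_le_mul_of_nonneg_left hSW (by positivity)

lemma norm_toLp_const_mul_rpow_le {ι : Type*} [Fintype ι] (c : ℝ) {v : ι → ℝ} {M : ℝ}
    (hv : ∑ i, v i ^ 2 ≤ M) {ρ : ℝ} (hρ : 0 ≤ ρ) :
    ‖(WithLp.toLp 2 (fun i => c * v i) : EuclideanSpace ℝ ι)‖ ^ ρ ≤ |c| ^ ρ * M ^ (ρ / 2) := by
  have hM : 0 ≤ M := (Finset.sum_nonneg fun i _ => sq_nonneg (v i)).trans hv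
  have hnorm : ‖(WithLp.toLp 2 (fun i => c * v i) : EuclideanSpace ℝ ι)‖
      = |c| * Real.sqrt (∑ i, v i ^ 2) := by
    rw [show (fun i => c * v i) = c • v from rfl, WithLp.toLp_smul, norm_smul,
      EuclideanSpace.norm_eq, Real.norm_eq_abs]
    simp only [Real.norm_eq_abs, sq_abs]
  calc _ ≤ (|c| * Real.sqrt M) ^ ρ := by
        rw [hnorm]; gcongr
    _ = |c| ^ ρ * M ^ (ρ / 2) := by
        rw [Real.mul_rpow (abs_nonneg c) (Real.sqrt_nonneg M), Real.sqrt_eq_rpow,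
          ← Real.rpow_mul hM, one_div_mul_eq_div]

lemma LipschitzWith.abs_sub_rpow_le_of_sub_eq_add_add {E : Type*} [SeminormedAddCommGroup E]
    {f : E → ℝ} {K : ℝ≥0} (hf : LipschitzWith K f) {ρ : ℝ} (hρ : 1 ≤ ρ) {x y a b c : E}
    (h : x - y = a + b + c) :
    |f x - f y| ^ ρ ≤ K ^ ρ * 3 ^ (ρ - 1) * (‖a‖ ^ ρ + ‖b‖ ^ ρ + ‖c‖ ^ ρ) := by
  have hρ0 : 0 ≤ ρ := zero_le_one.trans hρ
  have hsum : (‖a‖ + ‖b‖ + ‖c‖) ^ ρ ≤ 3 ^ (ρ - 1) * (‖a‖ ^ ρ + ‖b‖ ^ ρ + ‖c‖ ^ ρ) := by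
    simpa [Fin.sum_univ_three] using
      Real.rpow_sum_le_const_mul_sum_rpow_of_nonneg Finset.univ (f := ![‖a‖, ‖b‖, ‖c‖]) hρ
        (by simp [Fin.forall_fin_succ, norm_nonneg])
  calc |f x - f y| ^ ρ ≤ (K * (‖a‖ + ‖b‖ + ‖c‖)) ^ ρ := by
        gcongr
        calc |f x - f y| ≤ K * ‖x - y‖ := by
              simpa [Real.dist_eq, dist_eq_norm] using hf.dist_le_mul x y
          _ ≤ K * (‖a‖ + ‖b‖ + ‖c‖) := by rw [h]; gcongr; exact norm_add₃_le
    _ = K ^ ρ * (‖a‖ + ‖b‖ + ‖c‖) ^ ρ := Real.mul_rpow K.2 (by positivity)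
    _ ≤ K ^ ρ * 3 ^ (ρ - 1) * (‖a‖ ^ ρ + ‖b‖ ^ ρ + ‖c‖ ^ ρ) := by
        rw [mul_assoc]; gcongr

lemma lintegral_ofReal_le_of_le_mul_add {Ω : Type*} {mΩ : MeasurableSpace Ω} (μ : Measure Ω)
    {F g h : Ω → ℝ} {c : ℝ} (hc : 0 ≤ c) (hg : Measurable g)
    (hgi : ∫⁻ ω, ENNReal.ofReal (g ω) ∂μ < ⊤) (hhi : ∫⁻ ω, ENNReal.ofReal (h ω) ∂μ < ⊤)
    (hF : ∀ ω, F ω ≤ c * (g ω + h ω)) :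
    ∫⁻ ω, ENNReal.ofReal (F ω) ∂μ ≤ ENNReal.ofReal
      (c * ((∫⁻ ω, ENNReal.ofReal (g ω) ∂μ).toReal + (∫⁻ ω, ENNReal.ofReal (h ω) ∂μ).toReal)) := by
  have hpt : ∀ ω, ENNReal.ofReal (F ω)
      ≤ ENNReal.ofReal c * (ENNReal.ofReal (g ω) + ENNReal.ofReal (h ω)) := fun ω => by
    calc ENNReal.ofReal (F ω) ≤ ENNReal.ofReal (c * (g ω + h ω)) := ENNReal.ofReal_le_ofReal (hF ω)
      _ = ENNReal.ofReal c * ENNReal.ofReal (g ω + h ω) := ENNReal.ofReal_mul hc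
      _ ≤ _ := by gcongr; exact ENNReal.ofReal_add_le
  calc ∫⁻ ω, ENNReal.ofReal (F ω) ∂μ
      ≤ ∫⁻ ω, ENNReal.ofReal c * (ENNReal.ofReal (g ω) + ENNReal.ofReal (h ω)) ∂μ :=
        lintegral_mono hpt
    _ = ENNReal.ofReal c * (∫⁻ ω, ENNReal.ofReal (g ω) ∂μ + ∫⁻ ω, ENNReal.ofReal (h ω) ∂μ) := by
        rw [lintegral_const_mul' _ _ ENNReal.ofReal_ne_top, lintegral_add_left hg.ennreal_ofReal]
    _ = _ := by
        rw [← ENNReal.ofReal_toReal hgi.ne, ← ENNReal.ofReal_toReal hhi.ne,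
          ← ENNReal.ofReal_add ENNReal.toReal_nonneg ENNReal.toReal_nonneg,
          ← ENNReal.ofReal_mul hc, ENNReal.toReal_ofReal ENNReal.toReal_nonneg,
          ENNReal.toReal_ofReal ENNReal.toReal_nonneg]

lemma talay_increment_rpow_le {d N : ℕ} {f : EuclideanSpace ℝ (Fin d) → ℝ} {K : ℝ≥0}
    (hf : LipschitzWith K f) (x : EuclideanSpace ℝ (Fin d)) (bx Abx : Fin d → ℝ)
    (σx σtx : Matrix (Fin d) (Fin N) ℝ) (Dσ : Fin d → Fin d → Fin N → ℝ) {ρ : ℝ} (hρ : 1 ≤ ρ)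
    {γ : ℝ} (hγ : 0 ≤ γ) (u : Fin N → ℝ) (w : Fin N → Fin N → ℝ) :
    |f (WithLp.toLp 2 (fun i => x i + Real.sqrt γ * (∑ j, σx i j * u j)
          + γ * (bx i + ∑ j, ∑ k, ∑ l, Dσ l i j * σx l k * w j k)
          + γ ^ ((3 : ℝ) / 2) * (∑ j, σtx i j * u j) + γ ^ (2 : ℝ) * Abx i))
      - f (WithLp.toLp 2 (fun i => x i + γ * bx i + γ ^ (2 : ℝ) * Abx i))| ^ ρ
    ≤ K ^ ρ * 3 ^ (ρ - 1) * (γ ^ (ρ / 2) * (∑ i, ∑ j, σx i j ^ 2) ^ (ρ / 2)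
        + γ ^ ρ * (∑ l, ∑ i, ∑ j, Dσ l i j ^ 2) ^ (ρ / 2) * (∑ i, ∑ j, σx i j ^ 2) ^ (ρ / 2)
        + γ ^ (3 * ρ / 2) * (∑ i, ∑ j, σtx i j ^ 2) ^ (ρ / 2))
      * ((∑ j, u j ^ 2) ^ (ρ / 2) + (∑ i, ∑ j, w i j ^ 2) ^ (ρ / 2)) := by
  have hρ0 : 0 ≤ ρ := zero_le_one.trans hρ
  set T := ∑ i, ∑ j, σx i j ^ 2
  set DD := ∑ l, ∑ i, ∑ j, Dσ l i j ^ 2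
  set Tt := ∑ i, ∑ j, σtx i j ^ 2
  set U := ∑ j, u j ^ 2
  set V := ∑ i, ∑ j, w i j ^ 2
  have hdiff :
      (WithLp.toLp 2 (fun i => x i + Real.sqrt γ * (∑ j, σx i j * u j)
          + γ * (bx i + ∑ j, ∑ k, ∑ l, Dσ l i j * σx l k * w j k)
          + γ ^ ((3 : ℝ) / 2) * (∑ j, σtx i j * u j) + γ ^ (2 : ℝ) * Abx i) :
        EuclideanSpace ℝ (Fin d))
        - WithLp.toLp 2 (fun i => x i + γ * bx i + γ ^ (2 : ℝ) * Abx i)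
      = WithLp.toLp 2 (fun i => Real.sqrt γ * ∑ j, σx i j * u j)
        + WithLp.toLp 2 (fun i => γ * ∑ j, ∑ k, ∑ l, Dσ l i j * σx l k * w j k)
        + WithLp.toLp 2 (fun i => γ ^ ((3 : ℝ) / 2) * ∑ j, σtx i j * u j) := by
    ext i
    simp only [PiLp.sub_apply, PiLp.add_apply]
    ring
  have hσ : ‖(WithLp.toLp 2 (fun i => Real.sqrt γ * ∑ j, σx i j * u j) :
        EuclideanSpace ℝ (Fin d))‖ ^ ρ ≤ γ ^ (ρ / 2) * T ^ (ρ / 2) * U ^ (ρ / 2) := by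
    calc _ ≤ |Real.sqrt γ| ^ ρ * (T * U) ^ (ρ / 2) :=
          norm_toLp_const_mul_rpow_le _ (sum_sq_sum_mul_le σx u) hρ0
      _ = _ := by
          rw [abs_of_nonneg (Real.sqrt_nonneg γ), Real.sqrt_eq_rpow, ← Real.rpow_mul hγ,
            Real.mul_rpow (by positivity) (by positivity), one_div_mul_eq_div, mul_assoc]
  have hDσ : ‖(WithLp.toLp 2 (fun i => γ * ∑ j, ∑ k, ∑ l, Dσ l i j * σx l k * w j k) :
        EuclideanSpace ℝ (Fin d))‖ ^ ρ
      ≤ γ ^ ρ * DD ^ (ρ / 2) * T ^ (ρ / 2) * V ^ (ρ / 2) := by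
    calc _ ≤ |γ| ^ ρ * (DD * (T * V)) ^ (ρ / 2) :=
          norm_toLp_const_mul_rpow_le _ (sum_sq_sum_sum_sum_mul_mul_le Dσ σx w) hρ0
      _ = _ := by
          rw [abs_of_nonneg hγ, Real.mul_rpow (by positivity) (by positivity),
            Real.mul_rpow (by positivity) (by positivity)]
          ring
  have hσt : ‖(WithLp.toLp 2 (fun i => γ ^ ((3 : ℝ) / 2) * ∑ j, σtx i j * u j) :
        EuclideanSpace ℝ (Fin d))‖ ^ ρ ≤ γ ^ (3 * ρ / 2) * Tt ^ (ρ / 2) * U ^ (ρ / 2) := by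
    calc _ ≤ |γ ^ ((3 : ℝ) / 2)| ^ ρ * (Tt * U) ^ (ρ / 2) :=
          norm_toLp_const_mul_rpow_le _ (sum_sq_sum_mul_le σtx u) hρ0
      _ = _ := by
          rw [abs_of_nonneg (by positivity), ← Real.rpow_mul hγ, Real.mul_rpow (by positivity) (by positivity),
            mul_assoc, div_mul_eq_mul_div]
  have hP : 0 ≤ γ ^ (ρ / 2) * T ^ (ρ / 2) := by positivity
  have hQ : 0 ≤ γ ^ ρ * DD ^ (ρ / 2) * T ^ (ρ / 2) := by positivity
  have hR : 0 ≤ γ ^ (3 * ρ / 2) * Tt ^ (ρ / 2) := by positivity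
  have hU' : 0 ≤ U ^ (ρ / 2) := by positivity
  have hV' : 0 ≤ V ^ (ρ / 2) := by positivity
  calc _ ≤ K ^ ρ * 3 ^ (ρ - 1) * (γ ^ (ρ / 2) * T ^ (ρ / 2) * U ^ (ρ / 2)
          + γ ^ ρ * DD ^ (ρ / 2) * T ^ (ρ / 2) * V ^ (ρ / 2)
          + γ ^ (3 * ρ / 2) * Tt ^ (ρ / 2) * U ^ (ρ / 2)) :=
        (hf.abs_sub_rpow_le_of_sub_eq_add_add hρ hdiff).trans (by gcongr)
    _ ≤ _ := by
        rw [mul_assoc _ _ (U ^ (ρ / 2) + V ^ (ρ / 2))]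
        gcongr
        nlinarith [mul_nonneg hP hV', mul_nonneg hQ hU', mul_nonneg hR hV']

theorem talay_step_growth_control_lipschitz_general {d N : ℕ} {Ω : Type*}
    {mΩ : MeasurableSpace Ω} (μ : Measure Ω)
    (f : EuclideanSpace ℝ (Fin d) → ℝ) (Kf : ℝ≥0) (hf : LipschitzWith Kf f)
    (x : EuclideanSpace ℝ (Fin d))
    (bx Abx : Fin d → ℝ) (σx σtx : Matrix (Fin d) (Fin N) ℝ)
    (Dσ : Fin d → Fin d → Fin N → ℝ)
    (ρ : ℝ) (hρ1 : 1 ≤ ρ)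
    (U : Ω → Fin N → ℝ) (W : Ω → Fin N → Fin N → ℝ)
    (hUmeas : Measurable U)
    (hUmom : ∫⁻ ω, ENNReal.ofReal ((∑ j, U ω j ^ 2) ^ (ρ / 2)) ∂μ < ⊤)
    (hWmom : ∫⁻ ω, ENNReal.ofReal ((∑ i, ∑ j, W ω i j ^ 2) ^ (ρ / 2)) ∂μ < ⊤) :
    ∃ Cf : ℝ, 0 ≤ Cf ∧ ∀ γ : ℝ, 0 < γ →
      ∫⁻ ω, ENNReal.ofReal
          (|f ((WithLp.toLp 2 (fun i => x i + Real.sqrt γ * (∑ j, σx i j * U ω j)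
                + γ * (bx i + ∑ j, ∑ k, ∑ l, Dσ l i j * σx l k * W ω j k)
                + γ ^ ((3 : ℝ) / 2) * (∑ j, σtx i j * U ω j)
                + γ ^ (2 : ℝ) * Abx i) : EuclideanSpace ℝ (Fin d)))
            - f ((WithLp.toLp 2 (fun i => x i + γ * bx i + γ ^ (2 : ℝ) * Abx i) :
                EuclideanSpace ℝ (Fin d)))| ^ ρ) ∂μ
        ≤ ENNReal.ofReal (Cf * (γ ^ (ρ / 2) * (∑ i, ∑ j, σx i j ^ 2) ^ (ρ / 2)
              + γ ^ ρ * (∑ l, ∑ i, ∑ j, Dσ l i j ^ 2) ^ (ρ / 2)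
                  * (∑ i, ∑ j, σx i j ^ 2) ^ (ρ / 2)
              + γ ^ (3 * ρ / 2) * (∑ i, ∑ j, σtx i j ^ 2) ^ (ρ / 2))) := by
  have hUρ : Measurable fun ω => (∑ j, U ω j ^ 2) ^ (ρ / 2) := by fun_prop
  set MU := (∫⁻ ω, ENNReal.ofReal ((∑ j, U ω j ^ 2) ^ (ρ / 2)) ∂μ).toReal
  set MW := (∫⁻ ω, ENNReal.ofReal ((∑ i, ∑ j, W ω i j ^ 2) ^ (ρ / 2)) ∂μ).toReal
  refine ⟨Kf ^ ρ * 3 ^ (ρ - 1) * (MU + MW), by positivity, fun γ hγ => ?_⟩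
  refine (lintegral_ofReal_le_of_le_mul_add μ (by positivity) hUρ hUmom hWmom fun ω =>
    talay_increment_rpow_le hf x bx Abx σx σtx Dσ hρ1 hγ.le (U ω) (W ω)).trans_eq ?_
  congr 1
  ring

/-- One-step growth control for the Talay scheme, Lipschitz version: for `f`
Lipschitz, `E|f(X̄') − f(x + γ b(x) + γ² Ab(x))|^ρ` is bounded by
`C_f (γ^{ρ/2} Tr[σσ*]^{ρ/2} + γ^ρ |Dσ|^ρ Tr[σσ*]^{ρ/2} + γ^{3ρ/2} Tr[σ̃σ̃*]^{ρ/2})`. -/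
theorem talay_step_growth_control_lipschitz {d N : ℕ} {Ω : Type*}
    {mΩ : MeasurableSpace Ω} (μ : Measure Ω) [IsProbabilityMeasure μ]
    (f : EuclideanSpace ℝ (Fin d) → ℝ) (Kf : ℝ≥0) (hf : LipschitzWith Kf f)
    (x : EuclideanSpace ℝ (Fin d))
    (bx Abx : Fin d → ℝ) (σx σtx : Matrix (Fin d) (Fin N) ℝ)
    (Dσ : Fin d → Fin d → Fin N → ℝ)
    (ρ : ℝ) (hρ1 : 1 ≤ ρ) (hρ2 : ρ ≤ 2)
    (U : Ω → Fin N → ℝ) (W : Ω → Fin N → Fin N → ℝ)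
    (hUmeas : Measurable U) (hWmeas : Measurable W)
    (hUcent : ∀ j, ∫ ω, U ω j ∂μ = 0)
    (hUcov : ∀ j k, ∫ ω, U ω j * U ω k ∂μ = if j = k then 1 else 0)
    (hUmom : ∫⁻ ω, ENNReal.ofReal ((∑ j, U ω j ^ 2) ^ (ρ / 2)) ∂μ < ⊤)
    (hWmom : ∫⁻ ω, ENNReal.ofReal ((∑ i, ∑ j, W ω i j ^ 2) ^ (ρ / 2)) ∂μ < ⊤) :
    ∃ Cf : ℝ, 0 ≤ Cf ∧ ∀ γ : ℝ, 0 < γ →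
      ∫⁻ ω, ENNReal.ofReal
          (|f ((WithLp.toLp 2 (fun i => x i + Real.sqrt γ * (∑ j, σx i j * U ω j)
                + γ * (bx i + ∑ j, ∑ k, ∑ l, Dσ l i j * σx l k * W ω j k)
                + γ ^ ((3 : ℝ) / 2) * (∑ j, σtx i j * U ω j)
                + γ ^ (2 : ℝ) * Abx i) : EuclideanSpace ℝ (Fin d)))
            - f ((WithLp.toLp 2 (fun i => x i + γ * bx i + γ ^ (2 : ℝ) * Abx i) :
                EuclideanSpace ℝ (Fin d)))| ^ ρ) ∂μ
        ≤ ENNReal.ofReal (Cf * (γ ^ (ρ / 2) * (∑ i, ∑ j, σx i j ^ 2) ^ (ρ / 2)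
              + γ ^ ρ * (∑ l, ∑ i, ∑ j, Dσ l i j ^ 2) ^ (ρ / 2)
                  * (∑ i, ∑ j, σx i j ^ 2) ^ (ρ / 2)
              + γ ^ (3 * ρ / 2) * (∑ i, ∑ j, σtx i j ^ 2) ^ (ρ / 2))) :=
  talay_step_growth_control_lipschitz_general (mΩ := mΩ) μ f Kf hf x bx Abx σx σtx Dσ ρ hρ1 U W
    hUmeas hUmom hWmom
end

section
/- Let ξ ∈ (0,1), γ_n = n^{−ξ}, Γ_n = ∑_{k≤n} γ_k, and H̃_n = ∑_{k≤n} γ_k^{q+1} for an integer q ≥ 1. Define r_n = min(√Γ_n, Γ_n / H̃_n) (up to constants). Then r_n ~ C n^{(qξ) ∧ ((1−ξ)/2)} as n → ∞, and this exponent is maximized at ξ = 1/(2q+1), yielding r_n ~ C n^{q/(2q+1)}. -/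
/-!
Comparing with `∫₁ⁿ x^(-s) dx` gives `∑_{k ≤ n} k^(-s) ∼ n^(1-s)/(1-s)` for `0 ≤ s < 1`. Hence
`√Γ_n` grows like `n^((1-ξ)/2)` and `Γ_n/H̃_n` like `n^((1-ξ) - (1-(q+1)ξ)) = n^(qξ)`, and the
minimum of two sequences with power growth grows like the smaller power. The exponent
`min (qξ) ((1-ξ)/2)` is the minimum of an increasing and a decreasing affine function of `ξ`,
so it is largest where they cross, at `ξ = 1/(2q+1)`.
-/

open Filter Topology

def HasPowerRate (f : ℕ → ℝ) (a A : ℝ) : Prop :=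
  Tendsto (fun n : ℕ => f n / (n : ℝ) ^ a) atTop (𝓝 A)

theorem tendsto_min_of_tendsto_atTop {α : Type*} {l : Filter α} {F G : α → ℝ} {A : ℝ}
    (hF : Tendsto F l (𝓝 A)) (hG : Tendsto G l atTop) :
    Tendsto (fun x => min (F x) (G x)) l (𝓝 A) := by
  refine hF.congr' ?_
  filter_upwards [hF.eventually (gt_mem_nhds (lt_add_one A)), hG.eventually_ge_atTop (A + 1)]
    with x hFx hGx
  exact (min_eq_left (by linarith)).symm

namespace HasPowerRate

variable {f g : ℕ → ℝ} {a b A B : ℝ}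

theorem sqrt (hf : HasPowerRate f a A) :
    HasPowerRate (fun n => √(f n)) (a / 2) √A := by
  refine ((Real.continuous_sqrt.tendsto A).comp hf).congr fun n => ?_
  have hn : (n : ℝ) ^ (a / 2) = √((n : ℝ) ^ a) := by
    rw [Real.sqrt_eq_rpow, ← Real.rpow_mul n.cast_nonneg, div_eq_mul_one_div]
  simp only [Function.comp_apply, hn, Real.sqrt_div' _ (Real.rpow_nonneg n.cast_nonneg a)]

theorem div (hf : HasPowerRate f a A) (hg : HasPowerRate g b B) (hB : B ≠ 0) :
    HasPowerRate (fun n => f n / g n) (a - b) (A / B) := by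
  refine (Tendsto.div hf hg hB).congr' ?_
  filter_upwards [eventually_gt_atTop 0] with n hn
  rw [Pi.div_apply, Real.rpow_sub (Nat.cast_pos.mpr hn), div_div_div_comm]

theorem tendsto_atTop_of_lt (hf : HasPowerRate f b B) (hB : 0 < B) (hab : a < b) :
    Tendsto (fun n : ℕ => f n / (n : ℝ) ^ a) atTop atTop := by
  have hpow : Tendsto (fun n : ℕ => (n : ℝ) ^ (b - a)) atTop atTop :=
    (tendsto_rpow_atTop (sub_pos.mpr hab)).comp tendsto_natCast_atTop_atTop
  refine (hf.pos_mul_atTop hB hpow).congr' ?_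
  filter_upwards [eventually_gt_atTop 0] with n hn
  have hn : (0 : ℝ) < n := Nat.cast_pos.mpr hn
  rw [Real.rpow_sub hn, div_mul_div_comm, mul_comm,
    mul_div_mul_left _ _ (Real.rpow_pos_of_pos hn b).ne']

theorem min_of_lt (hf : HasPowerRate f a A) (hg : HasPowerRate g b B) (hB : 0 < B) (hab : a < b) :
    HasPowerRate (fun n => min (f n) (g n)) a A := by
  refine (tendsto_min_of_tendsto_atTop hf (hg.tendsto_atTop_of_lt hB hab)).congr fun n => ?_
  exact min_div_div_right (Real.rpow_nonneg n.cast_nonneg a) _ _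

theorem min (hf : HasPowerRate f a A) (hg : HasPowerRate g b B) (hA : 0 < A) (hB : 0 < B) :
    ∃ C, 0 < C ∧ HasPowerRate (fun n => min (f n) (g n)) (min a b) C := by
  rcases lt_trichotomy a b with hab | rfl | hba
  · exact ⟨A, hA, by simpa only [min_eq_left hab.le] using hf.min_of_lt hg hB hab⟩
  · refine ⟨min A B, lt_min hA hB, (Tendsto.min hf hg).congr fun n => ?_⟩
    simp only [min_self, min_div_div_right (Real.rpow_nonneg n.cast_nonneg a)]
  · refine ⟨B, hB, ?_⟩
    simpa only [min_comm (f _), min_eq_right hba.le] using hg.min_of_lt hf hA hba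

end HasPowerRate

theorem integral_one_rpow_neg {s : ℝ} (hs : s < 1) (b : ℝ) :
    ∫ x in (1 : ℝ)..b, x ^ (-s) = (b ^ (1 - s) - 1) / (1 - s) := by
  rw [integral_rpow (Or.inl (by linarith)), Real.one_rpow, neg_add_eq_sub]

theorem sum_Icc_rpow_neg_ge {s : ℝ} (hs0 : 0 ≤ s) (hs1 : s < 1) (n : ℕ) :
    ((n : ℝ) ^ (1 - s) - 1) / (1 - s) ≤ ∑ k ∈ Finset.Icc 1 n, (k : ℝ) ^ (-s) := by
  have hanti : AntitoneOn (fun x : ℝ => x ^ (-s)) (Set.Icc (1 : ℕ) (n + 1 : ℕ)) :=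
    (Real.antitoneOn_rpow_Ioi_of_exponent_nonpos (by linarith)).mono
      fun x hx => lt_of_lt_of_le one_pos (by exact_mod_cast hx.1)
  calc ((n : ℝ) ^ (1 - s) - 1) / (1 - s)
      ≤ (((n + 1 : ℕ) : ℝ) ^ (1 - s) - 1) / (1 - s) := by
        gcongr; omega
    _ = ∫ x in ((1 : ℕ) : ℝ)..((n + 1 : ℕ) : ℝ), x ^ (-s) := by
        rw [Nat.cast_one, integral_one_rpow_neg hs1]
    _ ≤ ∑ k ∈ Finset.Ico 1 (n + 1), (k : ℝ) ^ (-s) := hanti.integral_le_sum_Ico (by omega)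
    _ = ∑ k ∈ Finset.Icc 1 n, (k : ℝ) ^ (-s) := by rw [Finset.Ico_add_one_right_eq_Icc]

theorem sum_Icc_rpow_neg_le {s : ℝ} (hs0 : 0 ≤ s) (hs1 : s < 1) {n : ℕ} (hn : 1 ≤ n) :
    ∑ k ∈ Finset.Icc 1 n, (k : ℝ) ^ (-s) ≤ 1 + ((n : ℝ) ^ (1 - s) - 1) / (1 - s) := by
  have hanti : AntitoneOn (fun x : ℝ => x ^ (-s)) (Set.Icc (1 : ℕ) n) :=
    (Real.antitoneOn_rpow_Ioi_of_exponent_nonpos (by linarith)).mono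
      fun x hx => lt_of_lt_of_le one_pos (by exact_mod_cast hx.1)
  calc ∑ k ∈ Finset.Icc 1 n, (k : ℝ) ^ (-s)
      = 1 + ∑ k ∈ Finset.Ico 1 n, ((k + 1 : ℕ) : ℝ) ^ (-s) := by
        rw [← Finset.Ico_add_one_right_eq_Icc, Finset.sum_eq_sum_Ico_succ_bot (by omega),
          Finset.sum_Ico_add' (fun k : ℕ => (k : ℝ) ^ (-s))]
        simp
    _ ≤ 1 + ∫ x in ((1 : ℕ) : ℝ)..(n : ℝ), x ^ (-s) := by
        gcongr; exact hanti.sum_le_integral_Ico hn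
    _ = 1 + ((n : ℝ) ^ (1 - s) - 1) / (1 - s) := by
        rw [Nat.cast_one, integral_one_rpow_neg hs1]

theorem hasPowerRate_sum_Icc_rpow_neg {s : ℝ} (hs0 : 0 ≤ s) (hs1 : s < 1) :
    HasPowerRate (fun n => ∑ k ∈ Finset.Icc 1 n, (k : ℝ) ^ (-s)) (1 - s) (1 / (1 - s)) := by
  have hs : 0 < 1 - s := sub_pos.mpr hs1
  have hinv : Tendsto (fun n : ℕ => ((n : ℝ) ^ (1 - s))⁻¹) atTop (𝓝 0) :=
    ((tendsto_rpow_atTop hs).comp tendsto_natCast_atTop_atTop).inv_tendsto_atTop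
  have hlower := (tendsto_const_nhds (x := 1 / (1 - s))).sub (hinv.const_mul (1 / (1 - s)))
  have hupper := (tendsto_const_nhds (x := 1 / (1 - s))).add (hinv.const_mul (1 - 1 / (1 - s)))
  simp only [mul_zero, sub_zero, add_zero] at hlower hupper
  refine tendsto_of_tendsto_of_tendsto_of_le_of_le' hlower hupper ?_ ?_
  all_goals
    filter_upwards [eventually_ge_atTop 1] with n hn
    have hpos : 0 < (n : ℝ) ^ (1 - s) := Real.rpow_pos_of_pos (by exact_mod_cast hn) _
  · calc 1 / (1 - s) - 1 / (1 - s) * ((n : ℝ) ^ (1 - s))⁻¹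
        = (((n : ℝ) ^ (1 - s) - 1) / (1 - s)) / (n : ℝ) ^ (1 - s) := by field_simp
      _ ≤ _ := by gcongr; exact sum_Icc_rpow_neg_ge hs0 hs1 n
  · calc _ ≤ (1 + ((n : ℝ) ^ (1 - s) - 1) / (1 - s)) / (n : ℝ) ^ (1 - s) := by
          gcongr; exact sum_Icc_rpow_neg_le hs0 hs1 hn
      _ = 1 / (1 - s) + (1 - 1 / (1 - s)) * ((n : ℝ) ^ (1 - s))⁻¹ := by field_simp; ring

theorem one_sub_one_div_two_mul_add_one_div_two {q : ℝ} (hq : 2 * q + 1 ≠ 0) :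
    (1 - 1 / (2 * q + 1)) / 2 = q / (2 * q + 1) := by
  field_simp; ring

theorem min_mul_one_sub_div_two_le {q ξ : ℝ} (hq : 0 ≤ q) :
    min (q * ξ) ((1 - ξ) / 2) ≤ q / (2 * q + 1) := by
  have h2q : 0 < 2 * q + 1 := by linarith
  rcases le_total ξ (1 / (2 * q + 1)) with h | h
  · calc min (q * ξ) ((1 - ξ) / 2) ≤ q * (1 / (2 * q + 1)) := (min_le_left _ _).trans (by gcongr)
      _ = q / (2 * q + 1) := mul_one_div q _
  · calc min (q * ξ) ((1 - ξ) / 2) ≤ (1 - 1 / (2 * q + 1)) / 2 :=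
          (min_le_right _ _).trans (by gcongr)
      _ = q / (2 * q + 1) := one_sub_one_div_two_mul_add_one_div_two h2q.ne'

theorem rate_optimization_general (q : ℕ) (ξ : ℝ) (hξ0 : 0 < ξ)
    (hξq : ((q : ℝ) + 1) * ξ < 1) :
    (∃ C : ℝ, 0 < C ∧ Tendsto (fun n : ℕ =>
        min (Real.sqrt (∑ k ∈ Finset.Icc 1 n, (k : ℝ) ^ (-ξ)))
            ((∑ k ∈ Finset.Icc 1 n, (k : ℝ) ^ (-ξ)) /
              (∑ k ∈ Finset.Icc 1 n, (k : ℝ) ^ (-(((q : ℝ) + 1) * ξ))))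
          / (n : ℝ) ^ min ((q : ℝ) * ξ) ((1 - ξ) / 2)) atTop (nhds C))
    ∧ (∀ ξ' : ℝ, 0 < ξ' → ξ' < 1 →
        min ((q : ℝ) * ξ') ((1 - ξ') / 2) ≤ (q : ℝ) / (2 * (q : ℝ) + 1))
    ∧ min ((q : ℝ) * (1 / (2 * (q : ℝ) + 1))) ((1 - 1 / (2 * (q : ℝ) + 1)) / 2)
        = (q : ℝ) / (2 * (q : ℝ) + 1) := by
  have hξ1 : ξ < 1 := by nlinarith [q.cast_nonneg (α := ℝ)]
  have hΓ := hasPowerRate_sum_Icc_rpow_neg hξ0.le hξ1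
  have hH := hasPowerRate_sum_Icc_rpow_neg (by positivity) hξq
  have hΓ0 : 0 < 1 / (1 - ξ) := one_div_pos.mpr (by linarith)
  have hH0 : 0 < 1 / (1 - ((q : ℝ) + 1) * ξ) := one_div_pos.mpr (by linarith)
  obtain ⟨C, hC, hmin⟩ :=
    hΓ.sqrt.min (hΓ.div hH hH0.ne') (Real.sqrt_pos.mpr hΓ0) (div_pos hΓ0 hH0)
  rw [show 1 - ξ - (1 - ((q : ℝ) + 1) * ξ) = q * ξ by ring, min_comm ((1 - ξ) / 2)] at hmin
  refine ⟨⟨C, hC, hmin⟩, fun ξ' _ _ => min_mul_one_sub_div_two_le q.cast_nonneg, ?_⟩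
  rw [mul_one_div, one_sub_one_div_two_mul_add_one_div_two (by positivity), min_self]

/-- Rate optimization for the order-`q` CLT with steps `γ_n = n^{−ξ}`:
with `Γ_n = ∑_{k≤n} k^{−ξ}` and `H̃_n = ∑_{k≤n} k^{−(q+1)ξ}`, the rate
`r_n = min(√Γ_n, Γ_n/H̃_n)` satisfies `r_n ∼ C n^{(qξ) ∧ ((1−ξ)/2)}`; the exponent
is at most `q/(2q+1)` for all `ξ ∈ (0,1)`, with equality at `ξ = 1/(2q+1)`. -/
theorem rate_optimization (q : ℕ) (hq : 1 ≤ q) (ξ : ℝ) (hξ0 : 0 < ξ) (hξ1 : ξ < 1)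
    (hξq : ((q : ℝ) + 1) * ξ < 1) :
    (∃ C : ℝ, 0 < C ∧ Tendsto (fun n : ℕ =>
        min (Real.sqrt (∑ k ∈ Finset.Icc 1 n, (k : ℝ) ^ (-ξ)))
            ((∑ k ∈ Finset.Icc 1 n, (k : ℝ) ^ (-ξ)) /
              (∑ k ∈ Finset.Icc 1 n, (k : ℝ) ^ (-(((q : ℝ) + 1) * ξ))))
          / (n : ℝ) ^ min ((q : ℝ) * ξ) ((1 - ξ) / 2)) atTop (nhds C))
    ∧ (∀ ξ' : ℝ, 0 < ξ' → ξ' < 1 →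
        min ((q : ℝ) * ξ') ((1 - ξ') / 2) ≤ (q : ℝ) / (2 * (q : ℝ) + 1))
    ∧ min ((q : ℝ) * (1 / (2 * (q : ℝ) + 1))) ((1 - 1 / (2 * (q : ℝ) + 1)) / 2)
        = (q : ℝ) / (2 * (q : ℝ) + 1) :=
  rate_optimization_general q ξ hξ0 hξq
end
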